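/- Let p1, p2, p3 be solution denominators with 1 ≤ deg p1 < deg p2 < deg p3. Then deg A1 = (n1−1)·deg p3 − 1, deg A2 = (n1−1)·deg p3 − 1 + (n2−n1)·deg p2, and deg A3 = (n1−1)·deg p3 − 1 + (n2−n1)·deg p2 + (n3−n2)·deg p1. -/

import Mathlib

open Polynomial

/-- Index set `{3, 2, 1, ∂}` for the terms of the generalized Abel equation. -/
inductive AbelIdx : Type
  | I1 : AbelIdx
  | I2 : AbelIdx
  | I3 : AbelIdx
  | D  : AbelIdx
  deriving DecidableEq

instance : Fintype AbelIdx where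
  elems := {AbelIdx.I1, AbelIdx.I2, AbelIdx.I3, AbelIdx.D}
  complete := by intro x; cases x <;> simp

/-- `p` is a solution denominator: `p ≠ 0` and
`p^(n3-2)·p' + A3 + A2·p^(n3-n2) + A1·p^(n3-n1) = 0`, i.e. `x = 1/p` solves the
generalized Abel equation `x' = A3 x^{n3} + A2 x^{n2} + A1 x^{n1}`. -/
def IsSolDen {𝕜 : Type*} [Field 𝕜] (n1 n2 n3 : ℕ) (A1 A2 A3 : Polynomial 𝕜)
    (p : Polynomial 𝕜) : Prop :=
  p ≠ 0 ∧
    p ^ (n3 - 2) * Polynomial.derivative p + A3 + A2 * p ^ (n3 - n2) + A1 * p ^ (n3 - n1) = 0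

/-- `Φ_ℓ(r)` for `ℓ ∈ {1,2,3,∂}`. -/
def Phi (n1 n2 n3 a1 a2 a3 r : ℕ) : AbelIdx → ℤ
  | .I1 => (n1 : ℤ) * r - a1
  | .I2 => (n2 : ℤ) * r - a2
  | .I3 => (n3 : ℤ) * r - a3
  | .D  => (r : ℤ) + 1

/-- `O_r`, the minimum of the four `Φ_ℓ(r)`. -/
def Omin (n1 n2 n3 a1 a2 a3 r : ℕ) : ℤ :=
  min (min (Phi n1 n2 n3 a1 a2 a3 r .I1) (Phi n1 n2 n3 a1 a2 a3 r .I2))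
      (min (Phi n1 n2 n3 a1 a2 a3 r .I3) (Phi n1 n2 n3 a1 a2 a3 r .D))

/-- `T_r = {ℓ : Φ_ℓ(r) = O_r}`. -/
def Tie (n1 n2 n3 a1 a2 a3 r : ℕ) : Finset AbelIdx :=
  Finset.univ.filter fun ℓ => Phi n1 n2 n3 a1 a2 a3 r ℓ = Omin n1 n2 n3 a1 a2 a3 r

/-- `r` is edge-admissible if `T_r` has at least two elements. -/
def EdgeAdmissible (n1 n2 n3 a1 a2 a3 r : ℕ) : Prop :=
  2 ≤ (Tie n1 n2 n3 a1 a2 a3 r).card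

/-- The edge polynomial `P_r(C)`. -/
noncomputable def edgePoly {𝕜 : Type*} [Field 𝕜] (n1 n2 n3 : ℕ)
    (A1 A2 A3 : Polynomial 𝕜) (r : ℕ) : Polynomial 𝕜 :=
  (if AbelIdx.I1 ∈ Tie n1 n2 n3 A1.natDegree A2.natDegree A3.natDegree r then
      Polynomial.C A1.leadingCoeff * Polynomial.X ^ n1 else 0) +
  (if AbelIdx.I2 ∈ Tie n1 n2 n3 A1.natDegree A2.natDegree A3.natDegree r then
      Polynomial.C A2.leadingCoeff * Polynomial.X ^ n2 else 0) +
  (if AbelIdx.I3 ∈ Tie n1 n2 n3 A1.natDegree A2.natDegree A3.natDegree r then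
      Polynomial.C A3.leadingCoeff * Polynomial.X ^ n3 else 0) +
  (if AbelIdx.D ∈ Tie n1 n2 n3 A1.natDegree A2.natDegree A3.natDegree r then
      (r : Polynomial 𝕜) * Polynomial.X else 0)

/-- The set `Γ` of candidate denominator degrees. -/
def Gamma (n1 n2 n3 a1 a2 a3 : ℕ) : Set ℕ :=
  {r | 0 < r ∧ ((n3 : ℤ) - n2) * r ≤ (a3 : ℤ) ∧
    (((n3 : ℤ) - n2) * r = (a3 : ℤ) - a2 ∨
     ((n3 : ℤ) - n1) * r = (a3 : ℤ) - a1 ∨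
     ((n2 : ℤ) - n1) * r = (a2 : ℤ) - a1 ∨
     ((n3 : ℤ) - 1) * r = (a3 : ℤ) + 1 ∨
     ((n2 : ℤ) - 1) * r = (a2 : ℤ) + 1 ∨
     ((n1 : ℤ) - 1) * r = (a1 : ℤ) + 1)}

/-- The nondegeneracy hypothesis (ND). -/
def ND {𝕜 : Type*} [Field 𝕜] (n1 n2 n3 : ℕ) (A1 A2 A3 : Polynomial 𝕜) : Prop :=
  ∀ r : ℕ, r ∈ Gamma n1 n2 n3 A1.natDegree A2.natDegree A3.natDegree →
    EdgeAdmissible n1 n2 n3 A1.natDegree A2.natDegree A3.natDegree r →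
    ((∀ c : 𝕜, c ≠ 0 → (edgePoly n1 n2 n3 A1 A2 A3 r).IsRoot c →
        (Polynomial.derivative (edgePoly n1 n2 n3 A1 A2 A3 r)).eval c ≠ 0) ∧
     (AbelIdx.D ∈ Tie n1 n2 n3 A1.natDegree A2.natDegree A3.natDegree r →
        ∀ c : 𝕜, c ≠ 0 → (edgePoly n1 n2 n3 A1 A2 A3 r).IsRoot c →
          ∀ m : ℕ, 1 ≤ m →
            (Polynomial.derivative (edgePoly n1 n2 n3 A1 A2 A3 r)).eval c + (m : 𝕜) ≠ 0) ∧
     (¬ ∃ c1 c2 ζ : 𝕜, c1 ≠ 0 ∧ c2 ≠ 0 ∧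
        (edgePoly n1 n2 n3 A1 A2 A3 r).IsRoot c1 ∧
        (edgePoly n1 n2 n3 A1 A2 A3 r).IsRoot c2 ∧
        ζ ≠ 1 ∧ c1 = ζ * c2 ∧
        (ζ ^ (n3 - n2) = 1 ∨ ζ ^ (n3 - n1) = 1 ∨ ζ ^ (n3 - 1) = 1)))

/-- The power-series form `E_r(y)` of the generalized Abel equation at infinity. -/
noncomputable def abelPS {𝕜 : Type*} [Field 𝕜] (n1 n2 n3 : ℕ)
    (A1 A2 A3 : Polynomial 𝕜) (r : ℕ) (y : PowerSeries 𝕜) : PowerSeries 𝕜 :=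
  PowerSeries.X ^ (((r : ℤ) + 1 - Omin n1 n2 n3 A1.natDegree A2.natDegree A3.natDegree r).toNat) *
      ((r : PowerSeries 𝕜) * y + PowerSeries.X * PowerSeries.derivativeFun y) +
  PowerSeries.X ^ ((Phi n1 n2 n3 A1.natDegree A2.natDegree A3.natDegree r AbelIdx.I1 -
      Omin n1 n2 n3 A1.natDegree A2.natDegree A3.natDegree r).toNat) *
      (A1.reverse : PowerSeries 𝕜) * y ^ n1 +
  PowerSeries.X ^ ((Phi n1 n2 n3 A1.natDegree A2.natDegree A3.natDegree r AbelIdx.I2 -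
      Omin n1 n2 n3 A1.natDegree A2.natDegree A3.natDegree r).toNat) *
      (A2.reverse : PowerSeries 𝕜) * y ^ n2 +
  PowerSeries.X ^ ((Phi n1 n2 n3 A1.natDegree A2.natDegree A3.natDegree r AbelIdx.I3 -
      Omin n1 n2 n3 A1.natDegree A2.natDegree A3.natDegree r).toNat) *
      (A3.reverse : PowerSeries 𝕜) * y ^ n3


section AbelAux


lemma sum4_deg {R : Type*} [CommRing R] {q1 q2 q3 q4 : R[X]} (h : q1 + q2 + q3 + q4 = 0) :
    q1.natDegree ≤ q2.natDegree ∨ q1.natDegree ≤ q3.natDegree ∨ q1.natDegree ≤ q4.natDegree := by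
  have h1 : q1 = -q2 + (-q3 + -q4) := by linear_combination h
  have h2 : q1.natDegree ≤ max (-q2).natDegree (max (-q3).natDegree (-q4).natDegree) := by
    rw [h1]; exact (natDegree_add_le _ _).trans (max_le_max le_rfl (natDegree_add_le _ _))
  simpa [natDegree_neg, le_max_iff] using h2

lemma crossA {c c' s s' R R' : ℤ} (hs : s < s') (hR : R < R') :
    c' + s' * R < c + s * R ∨ c + s * R' < c' + s' * R' := by
  rcases le_or_gt (c + s * R) (c' + s' * R) with h|h
  · right; nlinarith [mul_pos (sub_pos.2 hs) (sub_pos.2 hR)]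
  · left; exact h

lemma crossD' {c s sD R R' : ℤ} (hs : s < sD) (hR : R < R') :
    sD * R - 1 < c + s * R ∨ c + s * R' < sD * R' - 1 := by
  rcases le_or_gt (c + s * R) (sD * R - 1) with h|h
  · right; nlinarith [mul_pos (sub_pos.2 hs) (sub_pos.2 hR)]
  · left; exact h

lemma crossC {a c' s' R R' : ℤ} (hs : 0 < s') (hR : R < R') :
    c' + s' * R < a ∨ a < c' + s' * R' := by
  rcases le_or_gt a (c' + s' * R) with h|h
  · right; nlinarith [mul_pos hs (sub_pos.2 hR)]
  · left; exact h

lemma crossCD {a sD R R' : ℤ} (hs : 0 < sD) (hR : R < R') :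
    sD * R - 1 < a ∨ a < sD * R' - 1 := by
  rcases le_or_gt a (sD * R - 1) with h|h
  · right; nlinarith [mul_pos hs (sub_pos.2 hR)]
  · left; exact h

lemma step_A (a3 x12 x22 xD2 x13 x23 xD3 : ℤ)
    (C1 : xD2 < x12 ∨ x13 < xD3) (C2 : xD2 < x22 ∨ x23 < xD3) (C3 : xD2 < a3 ∨ a3 < xD3)
    (N31 : xD3 ≤ a3 ∨ xD3 ≤ x23 ∨ xD3 ≤ x13)
    (h1 : x12 ≤ xD2) (h2 : x22 ≤ xD2) (h3 : a3 ≤ xD2) : False := by omega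

lemma tie1 (a3 x11 x21 xD1 : ℤ)
    (notB : ¬ (x11 ≤ xD1 ∧ x21 ≤ xD1 ∧ a3 ≤ xD1))
    (notC : ¬ (x21 ≤ x11 ∧ a3 ≤ x11 ∧ xD1 ≤ x11))
    (N12 : a3 ≤ xD1 ∨ a3 ≤ x21 ∨ a3 ≤ x11)
    (N13 : x21 ≤ xD1 ∨ x21 ≤ a3 ∨ x21 ≤ x11) :
    x21 = a3 ∧ x11 ≤ x21 ∧ xD1 ≤ x21 := by omega

lemma tie2 (a3 x12 x22 xD2 : ℤ)
    (notA : ¬ (x12 ≤ xD2 ∧ x22 ≤ xD2 ∧ a3 ≤ xD2))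
    (h3lt : a3 < x22)
    (N21 : xD2 ≤ a3 ∨ xD2 ≤ x22 ∨ xD2 ≤ x12)
    (N22 : a3 ≤ xD2 ∨ a3 ≤ x22 ∨ a3 ≤ x12)
    (N23 : x22 ≤ xD2 ∨ x22 ≤ a3 ∨ x22 ≤ x12)
    (N24 : x12 ≤ xD2 ∨ x12 ≤ a3 ∨ x12 ≤ x22) :
    x12 = x22 ∧ a3 ≤ x12 ∧ xD2 ≤ x12 := by omega

lemma tie3 (a3 x13 x23 xD3 : ℤ)
    (N31 : xD3 ≤ a3 ∨ xD3 ≤ x23 ∨ xD3 ≤ x13)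
    (N34 : x13 ≤ xD3 ∨ x13 ≤ a3 ∨ x13 ≤ x23)
    (h23lt : x23 < x13) (h3lt3 : a3 < x13) :
    x13 = xD3 := by omega

lemma envelope (a1 a2 a3 s1 s2 sD R1 R2 R3 : ℤ)
    (hs2 : 0 < s2) (hs12 : s2 < s1) (hs1D : s1 < sD)
    (hR12 : R1 < R2) (hR23 : R2 < R3)
    (N1 : (sD * R1 - 1 ≤ a3 ∨ sD * R1 - 1 ≤ a2 + s2 * R1 ∨ sD * R1 - 1 ≤ a1 + s1 * R1) ∧
          (a3 ≤ sD * R1 - 1 ∨ a3 ≤ a2 + s2 * R1 ∨ a3 ≤ a1 + s1 * R1) ∧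
          (a2 + s2 * R1 ≤ sD * R1 - 1 ∨ a2 + s2 * R1 ≤ a3 ∨ a2 + s2 * R1 ≤ a1 + s1 * R1) ∧
          (a1 + s1 * R1 ≤ sD * R1 - 1 ∨ a1 + s1 * R1 ≤ a3 ∨ a1 + s1 * R1 ≤ a2 + s2 * R1))
    (N2 : (sD * R2 - 1 ≤ a3 ∨ sD * R2 - 1 ≤ a2 + s2 * R2 ∨ sD * R2 - 1 ≤ a1 + s1 * R2) ∧
          (a3 ≤ sD * R2 - 1 ∨ a3 ≤ a2 + s2 * R2 ∨ a3 ≤ a1 + s1 * R2) ∧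
          (a2 + s2 * R2 ≤ sD * R2 - 1 ∨ a2 + s2 * R2 ≤ a3 ∨ a2 + s2 * R2 ≤ a1 + s1 * R2) ∧
          (a1 + s1 * R2 ≤ sD * R2 - 1 ∨ a1 + s1 * R2 ≤ a3 ∨ a1 + s1 * R2 ≤ a2 + s2 * R2))
    (N3 : (sD * R3 - 1 ≤ a3 ∨ sD * R3 - 1 ≤ a2 + s2 * R3 ∨ sD * R3 - 1 ≤ a1 + s1 * R3) ∧
          (a3 ≤ sD * R3 - 1 ∨ a3 ≤ a2 + s2 * R3 ∨ a3 ≤ a1 + s1 * R3) ∧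
          (a2 + s2 * R3 ≤ sD * R3 - 1 ∨ a2 + s2 * R3 ≤ a3 ∨ a2 + s2 * R3 ≤ a1 + s1 * R3) ∧
          (a1 + s1 * R3 ≤ sD * R3 - 1 ∨ a1 + s1 * R3 ≤ a3 ∨ a1 + s1 * R3 ≤ a2 + s2 * R3)) :
    a2 + s2 * R1 = a3 ∧ a1 + s1 * R2 = a2 + s2 * R2 ∧ a1 + s1 * R3 = sD * R3 - 1 := by
  have hs1 : (0:ℤ) < s1 := hs2.trans hs12
  have hsD : (0:ℤ) < sD := hs1.trans hs1D
  have hs2D : s2 < sD := hs12.trans hs1D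
  have C1 := crossD' (c := a1) (s := s1) hs1D hR23
  have C2 := crossD' (c := a2) (s := s2) hs2D hR23
  have C3 := crossCD (a := a3) (sD := sD) hsD hR23
  have C4 := crossA (c := a2) (s := s2) (c' := a1) (s' := s1) hs12 hR12
  have C5 := crossC (a := a3) (c' := a1) (s' := s1) hs1 hR12
  have C6 := crossD' (c := a1) (s := s1) hs1D hR12
  have C7 := crossD' (c := a2) (s := s2) hs2D hR12
  have C8 := crossCD (a := a3) (sD := sD) hsD hR12
  have C9 := crossC (a := a3) (c' := a2) (s' := s2) hs2 hR12
  have C10 := crossA (c := a2) (s := s2) (c' := a1) (s' := s1) hs12 hR23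
  have C11 := crossC (a := a3) (c' := a1) (s' := s1) hs1 hR23
  set x11 := a1 + s1 * R1 with hx11
  set x12 := a1 + s1 * R2 with hx12
  set x13 := a1 + s1 * R3 with hx13
  set x21 := a2 + s2 * R1 with hx21
  set x22 := a2 + s2 * R2 with hx22
  set x23 := a2 + s2 * R3 with hx23
  set xD1 := sD * R1 - 1 with hxD1
  set xD2 := sD * R2 - 1 with hxD2
  set xD3 := sD * R3 - 1 with hxD3
  clear_value x11 x12 x13 x21 x22 x23 xD1 xD2 xD3
  obtain ⟨N11, N12, N13, N14⟩ := N1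
  obtain ⟨N21, N22, N23, N24⟩ := N2
  obtain ⟨N31, N32, N33, N34⟩ := N3
  have notA : ¬ (x12 ≤ xD2 ∧ x22 ≤ xD2 ∧ a3 ≤ xD2) := by
    rintro ⟨h1, h2, h3⟩
    exact step_A a3 x12 x22 xD2 x13 x23 xD3 C1 C2 C3 N31 h1 h2 h3
  have notB : ¬ (x11 ≤ xD1 ∧ x21 ≤ xD1 ∧ a3 ≤ xD1) := by
    rintro ⟨h1, h2, h3⟩
    have h4 : x12 ≤ xD2 := by rcases C6 with h|h <;> [exact absurd h1 (not_le.2 h); exact h.le]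
    have h5 : x22 ≤ xD2 := by rcases C7 with h|h <;> [exact absurd h2 (not_le.2 h); exact h.le]
    have h6 : a3 ≤ xD2 := by rcases C8 with h|h <;> [exact absurd h3 (not_le.2 h); exact h.le]
    exact notA ⟨h4, h5, h6⟩
  have notC : ¬ (x21 ≤ x11 ∧ a3 ≤ x11 ∧ xD1 ≤ x11) := by
    rintro ⟨h1, h2, h3⟩
    have h4 : x22 < x12 := by rcases C4 with h|h <;> [exact absurd h1 (not_le.2 h); exact h]
    have h5 : a3 < x12 := by rcases C5 with h|h <;> [exact absurd h2 (not_le.2 h); exact h]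
    have h6 : x12 ≤ xD2 := by
      rcases N24 with h|h|h
      · exact h
      · exact absurd h (not_le.2 h5)
      · exact absurd h (not_le.2 h4)
    exact notA ⟨h6, by linarith, by linarith⟩
  have T1 := tie1 a3 x11 x21 xD1 notB notC N12 N13
  have h3lt : a3 < x22 := by
    rcases C9 with h|h
    · exact absurd T1.1.ge (not_le.2 h)
    · exact h
  have T2 := tie2 a3 x12 x22 xD2 notA h3lt N21 N22 N23 N24
  have h23lt : x23 < x13 := by
    rcases C10 with h|h
    · exact absurd T2.1.ge (not_le.2 h)
    · exact h
  have h3lt3 : a3 < x13 := by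
    rcases C11 with h|h
    · exact absurd T2.2.1 (not_le.2 h)
    · exact h
  have T3 := tie3 a3 x13 x23 xD3 N31 N34 h23lt h3lt3
  exact ⟨T1.1, T2.1, T3⟩

lemma point_facts {𝕜 : Type*} [RCLike 𝕜] {n1 n2 n3 : ℕ}
    (hn1 : 1 < n1) (hn12 : n1 < n2) (hn23 : n2 < n3)
    {A1 A2 A3 : Polynomial 𝕜} (hA1 : A1 ≠ 0) (hA2 : A2 ≠ 0) (hA3 : A3 ≠ 0)
    {p : Polynomial 𝕜} (hp : IsSolDen n1 n2 n3 A1 A2 A3 p) (hr : 1 ≤ p.natDegree) :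
    (((n3:ℤ)-1) * (p.natDegree:ℤ) - 1 ≤ (A3.natDegree:ℤ) ∨
     ((n3:ℤ)-1) * (p.natDegree:ℤ) - 1 ≤ (A2.natDegree:ℤ) + ((n3:ℤ)-(n2:ℤ)) * (p.natDegree:ℤ) ∨
     ((n3:ℤ)-1) * (p.natDegree:ℤ) - 1 ≤ (A1.natDegree:ℤ) + ((n3:ℤ)-(n1:ℤ)) * (p.natDegree:ℤ)) ∧
    ((A3.natDegree:ℤ) ≤ ((n3:ℤ)-1) * (p.natDegree:ℤ) - 1 ∨
     (A3.natDegree:ℤ) ≤ (A2.natDegree:ℤ) + ((n3:ℤ)-(n2:ℤ)) * (p.natDegree:ℤ) ∨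
     (A3.natDegree:ℤ) ≤ (A1.natDegree:ℤ) + ((n3:ℤ)-(n1:ℤ)) * (p.natDegree:ℤ)) ∧
    ((A2.natDegree:ℤ) + ((n3:ℤ)-(n2:ℤ)) * (p.natDegree:ℤ) ≤ ((n3:ℤ)-1) * (p.natDegree:ℤ) - 1 ∨
     (A2.natDegree:ℤ) + ((n3:ℤ)-(n2:ℤ)) * (p.natDegree:ℤ) ≤ (A3.natDegree:ℤ) ∨
     (A2.natDegree:ℤ) + ((n3:ℤ)-(n2:ℤ)) * (p.natDegree:ℤ) ≤
       (A1.natDegree:ℤ) + ((n3:ℤ)-(n1:ℤ)) * (p.natDegree:ℤ)) ∧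
    ((A1.natDegree:ℤ) + ((n3:ℤ)-(n1:ℤ)) * (p.natDegree:ℤ) ≤ ((n3:ℤ)-1) * (p.natDegree:ℤ) - 1 ∨
     (A1.natDegree:ℤ) + ((n3:ℤ)-(n1:ℤ)) * (p.natDegree:ℤ) ≤ (A3.natDegree:ℤ) ∨
     (A1.natDegree:ℤ) + ((n3:ℤ)-(n1:ℤ)) * (p.natDegree:ℤ) ≤
       (A2.natDegree:ℤ) + ((n3:ℤ)-(n2:ℤ)) * (p.natDegree:ℤ)) := by
  obtain ⟨hp0, heq⟩ := hp
  have hrpos : 0 < p.natDegree := hr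
  have hdd := degree_derivative_eq p hrpos
  have hne : derivative p ≠ 0 := by
    intro h; rw [h, degree_zero] at hdd; simp at hdd
  have hdnat : (derivative p).natDegree = p.natDegree - 1 := natDegree_eq_of_degree_eq_some hdd
  have hQD : (p ^ (n3-2) * derivative p).natDegree = (n3-2)*p.natDegree + (p.natDegree-1) := by
    rw [natDegree_mul (pow_ne_zero _ hp0) hne, natDegree_pow, hdnat]
  have hQ2 : (A2 * p ^ (n3-n2)).natDegree = A2.natDegree + (n3-n2)*p.natDegree := by
    rw [natDegree_mul hA2 (pow_ne_zero _ hp0), natDegree_pow]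
  have hQ1 : (A1 * p ^ (n3-n1)).natDegree = A1.natDegree + (n3-n1)*p.natDegree := by
    rw [natDegree_mul hA1 (pow_ne_zero _ hp0), natDegree_pow]
  have eD := sum4_deg heq
  have e3 := sum4_deg (show A3 + (p ^ (n3-2) * derivative p) + A2 * p ^ (n3-n2) +
      A1 * p ^ (n3-n1) = 0 by linear_combination heq)
  have e2 := sum4_deg (show A2 * p ^ (n3-n2) + (p ^ (n3-2) * derivative p) + A3 +
      A1 * p ^ (n3-n1) = 0 by linear_combination heq)
  have e1 := sum4_deg (show A1 * p ^ (n3-n1) + (p ^ (n3-2) * derivative p) + A3 +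
      A2 * p ^ (n3-n2) = 0 by linear_combination heq)
  rw [hQD, hQ2, hQ1] at eD e3 e2 e1
  have HD : (((n3-2)*p.natDegree + (p.natDegree-1) : ℕ) : ℤ) =
      ((n3:ℤ)-1) * (p.natDegree:ℤ) - 1 := by
    push_cast [Nat.cast_sub (show 2 ≤ n3 by omega), Nat.cast_sub hr]; ring
  have H2 : ((A2.natDegree + (n3-n2)*p.natDegree : ℕ) : ℤ) =
      (A2.natDegree:ℤ) + ((n3:ℤ)-(n2:ℤ)) * (p.natDegree:ℤ) := by
    push_cast [Nat.cast_sub hn23.le]; ring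
  have H1 : ((A1.natDegree + (n3-n1)*p.natDegree : ℕ) : ℤ) =
      (A1.natDegree:ℤ) + ((n3:ℤ)-(n1:ℤ)) * (p.natDegree:ℤ) := by
    push_cast [Nat.cast_sub (show n1 ≤ n3 by omega)]; ring
  rw [← HD, ← H2, ← H1]
  refine ⟨?_, ?_, ?_, ?_⟩
  · exact_mod_cast eD
  · exact_mod_cast e3
  · exact_mod_cast e2
  · exact_mod_cast e1

end AbelAux

/-- Proposition 5.11. If `p1, p2, p3` are solution denominators
with `1 ≤ deg p1 < deg p2 < deg p3`, then the degrees of `A1, A2, A3` are determined: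
`deg A1 = (n1−1)·deg p3 − 1`, `deg A2 = deg A1 + (n2−n1)·deg p2`,
`deg A3 = deg A2 + (n3−n2)·deg p1`. -/
theorem stmt16 {𝕜 : Type*} [RCLike 𝕜] (n1 n2 n3 : ℕ)
    (hn1 : 1 < n1) (hn12 : n1 < n2) (hn23 : n2 < n3)
    (A1 A2 A3 : Polynomial 𝕜) (hA1 : A1 ≠ 0) (hA2 : A2 ≠ 0) (hA3 : A3 ≠ 0)
    (p1 p2 p3 : Polynomial 𝕜)
    (h1 : IsSolDen n1 n2 n3 A1 A2 A3 p1) (h2 : IsSolDen n1 n2 n3 A1 A2 A3 p2)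
    (h3 : IsSolDen n1 n2 n3 A1 A2 A3 p3)
    (hd1 : 1 ≤ p1.natDegree) (h12 : p1.natDegree < p2.natDegree)
    (h23 : p2.natDegree < p3.natDegree) :
    (A1.natDegree : ℤ) = ((n1 : ℤ) - 1) * p3.natDegree - 1 ∧
    (A2.natDegree : ℤ) =
      ((n1 : ℤ) - 1) * p3.natDegree - 1 + ((n2 : ℤ) - n1) * p2.natDegree ∧
    (A3.natDegree : ℤ) =
      ((n1 : ℤ) - 1) * p3.natDegree - 1 + ((n2 : ℤ) - n1) * p2.natDegree +
        ((n3 : ℤ) - n2) * p1.natDegree := by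
  have hr2 : 1 ≤ p2.natDegree := hd1.trans h12.le
  have hr3 : 1 ≤ p3.natDegree := hr2.trans h23.le
  have F1 := point_facts hn1 hn12 hn23 hA1 hA2 hA3 h1 hd1
  have F2 := point_facts hn1 hn12 hn23 hA1 hA2 hA3 h2 hr2
  have F3 := point_facts hn1 hn12 hn23 hA1 hA2 hA3 h3 hr3
  obtain ⟨E1, E2, E3⟩ := envelope (A1.natDegree:ℤ) (A2.natDegree:ℤ) (A3.natDegree:ℤ)
    ((n3:ℤ)-(n1:ℤ)) ((n3:ℤ)-(n2:ℤ)) ((n3:ℤ)-1)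
    (p1.natDegree:ℤ) (p2.natDegree:ℤ) (p3.natDegree:ℤ)
    (by omega) (by omega) (by omega)
    (by exact_mod_cast h12) (by exact_mod_cast h23) F1 F2 F3
  exact ⟨by linear_combination E3, by linear_combination E3 - E2,
    by linear_combination E3 - E2 - E1⟩
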